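/- Let n ≥ 2 be an integer, p ≠ 0 a real with p < n, μ ∈ ℝ and σ > 0. Let X and T be independent random variables with X ~ Exp(μ, σ/n) and T ~ Gamma(n−1, σ). For c ∈ ℝ with p·c < 1, the Linex risk at (μ, σ) of the estimator X + c·T is finite, and the function c ↦ Linex risk of X + c·T attains a strict global minimum on {c ∈ ℝ : p·c < 1} at c₀ = (1/p)·(1 − (n/(n−p))^{1/n}) (which satisfies p·c₀ < 1). Thus X + c₀·T is the best affine equivariant estimator of μ under Linex loss. -/

import Mathlib

open MeasureTheory ProbabilityTheory Real
open scoped ENNReal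

/-- Two-parameter exponential distribution `Exp(μ, θ)` with location `μ` and scale `θ`. -/
noncomputable def expLocMeasure (μ θ : ℝ) : Measure ℝ :=
  volume.withDensity fun x =>
    ENNReal.ofReal (if μ < x then θ⁻¹ * Real.exp (-(x - μ) / θ) else 0)

/-- Gamma distribution `Gamma(a, θ)` with shape `a` and scale `θ`. -/
noncomputable def gammaScaleMeasure (a θ : ℝ) : Measure ℝ :=
  volume.withDensity fun x =>
    ENNReal.ofReal (if 0 < x then x ^ (a - 1) * Real.exp (-x / θ) / (Real.Gamma a * θ ^ a) else 0)

/-- The Linex loss `e^{pt} - pt - 1`. -/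
noncomputable def linexLoss (p t : ℝ) : ℝ := Real.exp (p * t) - p * t - 1

/-- The Linex risk of an estimator `δ` of a location parameter `μ` at scale `σ`,
with values in `[0, ∞]`. -/
noncomputable def linexRisk {Ω : Type*} [MeasurableSpace Ω] (P : Measure Ω)
    (p μ σ : ℝ) (δ : Ω → ℝ) : ℝ≥0∞ :=
  ∫⁻ ω, ENNReal.ofReal (linexLoss p ((δ ω - μ) / σ)) ∂P

/-! With `Y = X - μ ~ Gamma(1, σ/n)` and `T ~ Gamma(n - 1, σ)` independent, the scaled error is
`p (X + c T - μ) / σ = (p/σ) Y + (p c/σ) T`, so the expected Linex loss factors through the two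
moment generating functions:
`R(c) = (1 - p/n)⁻¹ (1 - p c)^(-(n-1)) - p/n - (n - 1) p c - 1`, finite when `p c < 1`.
Writing `u = 1 - p c` and `v ^ n = (1 - p/n)⁻¹`, `R(c)` is `v ^ n u ^ (1 - n) + (n - 1) u` up to
a constant, and Bernoulli's inequality for `(v/u) ^ n` (weighted AM-GM) shows this exceeds its
value `n v` at `u = v`, i.e. at `c = c₀`, whenever `u ≠ v`. -/

open Set

section GammaScale

variable {a θ : ℝ}

lemma gammaScaleMeasure_eq_withDensity_restrict (a θ : ℝ) :
    gammaScaleMeasure a θ = (volume.restrict (Ioi 0)).withDensity fun x =>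
      ENNReal.ofReal (x ^ (a - 1) * exp (-x / θ) / (Gamma a * θ ^ a)) := by
  rw [gammaScaleMeasure, ← withDensity_indicator measurableSet_Ioi]
  congr 1
  ext x
  by_cases hx : 0 < x <;> simp [hx]

lemma gammaScale_density_nonneg (ha : 0 < a) (hθ : 0 < θ) {x : ℝ} (hx : x ∈ Ioi 0) :
    0 ≤ x ^ (a - 1) * exp (-x / θ) / (Gamma a * θ ^ a) := by
  have := Gamma_pos_of_pos ha
  have : (0 : ℝ) < x := hx
  positivity

lemma integrable_gammaScaleMeasure_iff (ha : 0 < a) (hθ : 0 < θ) {g : ℝ → ℝ} :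
    Integrable g (gammaScaleMeasure a θ) ↔
      IntegrableOn (fun x => x ^ (a - 1) * exp (-x / θ) / (Gamma a * θ ^ a) * g x) (Ioi 0) := by
  rw [gammaScaleMeasure_eq_withDensity_restrict, integrable_withDensity_iff_integrable_smul'
    (by fun_prop) (ae_of_all _ fun _ => ENNReal.ofReal_lt_top)]
  refine integrableOn_congr_fun (fun x hx => ?_) measurableSet_Ioi
  rw [ENNReal.toReal_ofReal (gammaScale_density_nonneg ha hθ hx), smul_eq_mul]

lemma integral_gammaScaleMeasure (ha : 0 < a) (hθ : 0 < θ) (g : ℝ → ℝ) :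
    ∫ x, g x ∂gammaScaleMeasure a θ =
      ∫ x in Ioi 0, x ^ (a - 1) * exp (-x / θ) / (Gamma a * θ ^ a) * g x := by
  rw [gammaScaleMeasure_eq_withDensity_restrict, integral_withDensity_eq_integral_toReal_smul
    (by fun_prop) (ae_of_all _ fun _ => ENNReal.ofReal_lt_top)]
  refine setIntegral_congr_fun measurableSet_Ioi (fun x hx => ?_)
  rw [ENNReal.toReal_ofReal (gammaScale_density_nonneg ha hθ hx), smul_eq_mul]

theorem gammaScaleMeasure_rpow_mul_exp {k b : ℝ} (ha : 0 < a) (hak : 0 < a + k) (hθ : 0 < θ)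
    (hb : b * θ < 1) :
    Integrable (fun x => x ^ k * exp (b * x)) (gammaScaleMeasure a θ) ∧
      ∫ x, x ^ k * exp (b * x) ∂gammaScaleMeasure a θ =
        Gamma (a + k) / Gamma a * θ ^ k * (1 - b * θ) ^ (-(a + k)) := by
  set r := θ⁻¹ - b
  have hr : 0 < r := by
    have : b < θ⁻¹ := by rwa [← one_div, lt_div_iff₀ hθ]
    simpa [r, sub_pos]
  have hrθ : r * θ = 1 - b * θ := by simp only [r]; field_simp
  have hkernel : EqOn
      (fun x => x ^ (a - 1) * exp (-x / θ) / (Gamma a * θ ^ a) * (x ^ k * exp (b * x)))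
      (fun x => (Gamma a * θ ^ a)⁻¹ * (x ^ (a + k - 1) * exp (-(r * x)))) (Ioi 0) := by
    intro x (hx : 0 < x)
    dsimp only
    have hexp : exp (-x / θ) * exp (b * x) = exp (-(r * x)) := by
      rw [← exp_add]; congr 1; simp only [r]; field_simp; ring
    rw [show a + k - 1 = (a - 1) + k by ring, rpow_add hx, ← hexp]
    ring
  have hint : IntegrableOn (fun x => x ^ (a + k - 1) * exp (-(r * x))) (Ioi 0) := by
    simpa using integrableOn_rpow_mul_exp_neg_mul_rpow (s := a + k - 1) (p := 1)
      (by linarith) one_pos hr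
  constructor
  · rw [integrable_gammaScaleMeasure_iff ha hθ]
    exact IntegrableOn.congr_fun (hint.const_mul _) hkernel.symm measurableSet_Ioi
  · rw [integral_gammaScaleMeasure ha hθ, setIntegral_congr_fun measurableSet_Ioi hkernel,
      integral_const_mul, integral_rpow_mul_exp_neg_mul_Ioi hak hr, ← hrθ,
      rpow_neg (mul_nonneg hr.le hθ.le), mul_rpow hr.le hθ.le, rpow_add hθ, one_div,
      inv_rpow hr.le]
    have := Gamma_pos_of_pos ha
    have : 0 < r ^ (a + k) := by positivity
    have : 0 < θ ^ a := by positivity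
    have : 0 < θ ^ k := by positivity
    field_simp

lemma gammaScaleMeasure_exp_mul {b : ℝ} (ha : 0 < a) (hθ : 0 < θ) (hb : b * θ < 1) :
    Integrable (fun x => exp (b * x)) (gammaScaleMeasure a θ) ∧
      ∫ x, exp (b * x) ∂gammaScaleMeasure a θ = (1 - b * θ) ^ (-a) := by
  simpa [(Gamma_pos_of_pos ha).ne'] using
    gammaScaleMeasure_rpow_mul_exp (k := 0) ha (by simpa) hθ hb

lemma gammaScaleMeasure_mean (ha : 0 < a) (hθ : 0 < θ) :
    Integrable (fun x => x) (gammaScaleMeasure a θ) ∧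
      ∫ x, x ∂gammaScaleMeasure a θ = a * θ := by
  have := gammaScaleMeasure_rpow_mul_exp (k := 1) (b := 0) ha (by linarith) hθ (by simp)
  simp only [rpow_one, zero_mul, exp_zero, mul_one, sub_zero, one_rpow, Gamma_add_one ha.ne'] at this
  rwa [mul_div_cancel_right₀ _ (Gamma_pos_of_pos ha).ne'] at this

end GammaScale

lemma expLocMeasure_eq_map_gammaScaleMeasure (μ θ : ℝ) :
    expLocMeasure μ θ = (gammaScaleMeasure 1 θ).map (· + μ) := by
  ext s hs
  rw [Measure.map_apply (measurable_add_const μ) hs, expLocMeasure, gammaScaleMeasure,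
    withDensity_apply _ hs, withDensity_apply _ (measurable_add_const μ hs),
    ← (measurePreserving_add_right volume μ).setLIntegral_comp_preimage_emb
      (measurableEmbedding_addRight μ)]
  refine setLIntegral_congr_fun (measurable_add_const μ hs) (fun x _ => ?_)
  simp [div_eq_inv_mul]

lemma mul_lt_rpow_mul_rpow_one_sub_add {q u v : ℝ} (hq : 1 < q) (hu : 0 < u) (hv : 0 < v)
    (huv : u ≠ v) : q * v < v ^ q * u ^ (1 - q) + (q - 1) * u := by
  have hvu : v / u - 1 ≠ 0 := sub_ne_zero.2 fun h => huv ((div_eq_one_iff_eq hu.ne').1 h).symm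
  have hB := one_add_mul_self_lt_rpow_one_add (by linarith [div_pos hv hu]) hvu hq
  rw [add_sub_cancel, div_rpow hv.le hu.le] at hB
  have huq : 0 < u ^ q := rpow_pos_of_pos hu q
  have hB' := mul_lt_mul_of_pos_right hB hu
  rw [rpow_sub hu, rpow_one]
  field_simp at hB' ⊢
  nlinarith

section AffineRisk

variable {n p c : ℝ}

noncomputable def affineLinexRisk (n p c : ℝ) : ℝ :=
  (1 - p / n) ^ (-1 : ℝ) * (1 - p * c) ^ (-(n - 1)) - (p / n + p * c * (n - 1)) - 1

noncomputable def optimalScale (n p : ℝ) : ℝ := (1 / p) * (1 - (n / (n - p)) ^ (1 / n))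

lemma one_sub_mul_optimalScale (hp : p ≠ 0) :
    1 - p * optimalScale n p = (n / (n - p)) ^ (1 / n) := by
  rw [optimalScale, ← mul_assoc, mul_one_div_cancel hp, one_mul, sub_sub_cancel]

lemma mul_optimalScale_lt_one (hn : 0 < n) (hp : p ≠ 0) (hpn : p < n) :
    p * optimalScale n p < 1 := by
  have := one_sub_mul_optimalScale (n := n) hp
  have : 0 < (n / (n - p)) ^ (1 / n) := rpow_pos_of_pos (div_pos hn (by linarith)) _
  linarith

theorem affineLinexRisk_optimalScale_lt (hn : 1 < n) (hp : p ≠ 0) (hpn : p < n)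
    (hc : p * c < 1) (hne : c ≠ optimalScale n p) :
    affineLinexRisk n p (optimalScale n p) < affineLinexRisk n p c := by
  have hn0 : 0 < n := by linarith
  set v := (n / (n - p)) ^ (1 / n) with hv_def
  have hv : 0 < v := rpow_pos_of_pos (div_pos hn0 (by linarith)) _
  have hopt : 1 - p * optimalScale n p = v := one_sub_mul_optimalScale hp
  have hvn : v ^ n = (1 - p / n) ^ (-1 : ℝ) := by
    rw [hv_def, ← rpow_mul (div_pos hn0 (by linarith)).le, one_div_mul_cancel hn0.ne', rpow_one,
      rpow_neg_one]
    field_simp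
  have hform : ∀ x, affineLinexRisk n p x =
      v ^ n * (1 - p * x) ^ (1 - n) + (n - 1) * (1 - p * x) - n - p / n := by
    intro x
    rw [affineLinexRisk, hvn, neg_sub]
    ring
  have hu : 0 < 1 - p * c := by linarith
  have huv : 1 - p * c ≠ v := by
    rw [← hopt]
    exact fun h => hne (mul_left_cancel₀ hp (by linarith))
  have hvv : v ^ n * v ^ (1 - n) = v := by rw [← rpow_add hv]; simp
  rw [hform, hform, hopt, hvv]
  linarith [mul_lt_rpow_mul_rpow_one_sub_add hn hu hv huv]

end AffineRisk

section Linex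

variable {Ω : Type*} [MeasurableSpace Ω] {P : Measure Ω}

lemma linexLoss_nonneg (p t : ℝ) : 0 ≤ linexLoss p t := by
  unfold linexLoss
  linarith [add_one_le_exp (p * t)]

lemma linexRisk_eq_ofReal_integral {p μ σ : ℝ} {δ : Ω → ℝ}
    (h : Integrable (fun ω => linexLoss p ((δ ω - μ) / σ)) P) :
    linexRisk P p μ σ δ = ENNReal.ofReal (∫ ω, linexLoss p ((δ ω - μ) / σ) ∂P) :=
  (ofReal_integral_eq_lintegral_ofReal h (ae_of_all _ fun _ => linexLoss_nonneg _ _)).symm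

lemma integrable_comp_and_integral_comp_of_map_eq {Y : Ω → ℝ} {ν : Measure ℝ} {g : ℝ → ℝ}
    {v : ℝ} (hY : Measurable Y) (hlaw : P.map Y = ν) (h : Integrable g ν ∧ ∫ x, g x ∂ν = v) :
    Integrable (fun ω => g (Y ω)) P ∧ ∫ ω, g (Y ω) ∂P = v := by
  subst hlaw
  exact ⟨h.1.comp_measurable hY, (integral_map hY.aemeasurable h.1.1).symm.trans h.2⟩

lemma map_sub_eq_gammaScaleMeasure {X : Ω → ℝ} {μ θ : ℝ} (hX : Measurable X)
    (hlaw : P.map X = expLocMeasure μ θ) :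
    P.map (fun ω => X ω - μ) = gammaScaleMeasure 1 θ := by
  change P.map ((· - μ) ∘ X) = _
  rw [← Measure.map_map (measurable_sub_const μ) hX, hlaw,
    expLocMeasure_eq_map_gammaScaleMeasure, Measure.map_map (measurable_sub_const μ)
    (measurable_add_const μ)]
  simp [Function.comp_def]

theorem integral_linexLoss_one_of_indepFun_gammaScale [IsProbabilityMeasure P] {Y T : Ω → ℝ}
    {a b θ θ' s t : ℝ} (hY : Measurable Y) (hT : Measurable T) (hind : IndepFun Y T P)
    (hYlaw : P.map Y = gammaScaleMeasure a θ) (hTlaw : P.map T = gammaScaleMeasure b θ')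
    (ha : 0 < a) (hb : 0 < b) (hθ : 0 < θ) (hθ' : 0 < θ') (hs : s * θ < 1) (ht : t * θ' < 1) :
    Integrable (fun ω => linexLoss 1 (s * Y ω + t * T ω)) P ∧
      ∫ ω, linexLoss 1 (s * Y ω + t * T ω) ∂P =
        (1 - s * θ) ^ (-a) * (1 - t * θ') ^ (-b) - (s * (a * θ) + t * (b * θ')) - 1 := by
  obtain ⟨hYexp, hYexp_int⟩ := integrable_comp_and_integral_comp_of_map_eq hY hYlaw
    (gammaScaleMeasure_exp_mul ha hθ hs)
  obtain ⟨hTexp, hTexp_int⟩ := integrable_comp_and_integral_comp_of_map_eq hT hTlaw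
    (gammaScaleMeasure_exp_mul hb hθ' ht)
  obtain ⟨hYi, hY_int⟩ := integrable_comp_and_integral_comp_of_map_eq hY hYlaw
    (gammaScaleMeasure_mean ha hθ)
  obtain ⟨hTi, hT_int⟩ := integrable_comp_and_integral_comp_of_map_eq hT hTlaw
    (gammaScaleMeasure_mean hb hθ')
  have hind_exp : IndepFun (fun ω => exp (s * Y ω)) (fun ω => exp (t * T ω)) P :=
    hind.comp (φ := fun y => exp (s * y)) (ψ := fun y => exp (t * y)) (by fun_prop) (by fun_prop)
  have hprod : Integrable (fun ω => exp (s * Y ω) * exp (t * T ω)) P :=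
    hind_exp.integrable_mul hYexp hTexp
  have hlin : Integrable (fun ω => s * Y ω + t * T ω) P := (hYi.const_mul s).add (hTi.const_mul t)
  have hloss : (fun ω => linexLoss 1 (s * Y ω + t * T ω)) =
      fun ω => exp (s * Y ω) * exp (t * T ω) - (s * Y ω + t * T ω) - 1 := by
    ext ω
    simp only [linexLoss, one_mul, exp_add]
  have hdiff : Integrable (fun ω => exp (s * Y ω) * exp (t * T ω) - (s * Y ω + t * T ω)) P :=
    hprod.sub hlin
  rw [hloss]
  refine ⟨hdiff.sub (integrable_const 1), ?_⟩
  rw [integral_sub hdiff (integrable_const 1), integral_sub hprod hlin,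
    hind_exp.integral_fun_mul_eq_mul_integral hYexp.1 hTexp.1, hYexp_int, hTexp_int,
    integral_add (hYi.const_mul s) (hTi.const_mul t), integral_const_mul, integral_const_mul,
    hY_int, hT_int]
  simp

theorem integral_linexLoss_add_mul [IsProbabilityMeasure P] {X T : Ω → ℝ} {n p μ σ c : ℝ}
    (hn : 1 < n) (hσ : 0 < σ) (hX : Measurable X) (hT : Measurable T) (hind : IndepFun X T P)
    (hXlaw : P.map X = expLocMeasure μ (σ / n)) (hTlaw : P.map T = gammaScaleMeasure (n - 1) σ)
    (hpn : p < n) (hc : p * c < 1) :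
    Integrable (fun ω => linexLoss p ((X ω + c * T ω - μ) / σ)) P ∧
      ∫ ω, linexLoss p ((X ω + c * T ω - μ) / σ) ∂P = affineLinexRisk n p c := by
  have h := integral_linexLoss_one_of_indepFun_gammaScale (s := p / σ) (t := p * c / σ)
    (hX.sub_const μ) hT (hind.comp (measurable_sub_const μ) measurable_id)
    (map_sub_eq_gammaScaleMeasure hX hXlaw) hTlaw one_pos (by linarith)
    (div_pos hσ (by linarith)) hσ (by field_simp; linarith) (by field_simp; linarith)
  have harg : ∀ ω, linexLoss p ((X ω + c * T ω - μ) / σ) =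
      linexLoss 1 (p / σ * (X ω - μ) + p * c / σ * T ω) := by
    intro ω
    simp only [linexLoss, one_mul]
    field_simp
    ring_nf
  simp only [harg]
  refine ⟨h.1, h.2.trans ?_⟩
  rw [affineLinexRisk]
  field_simp

end Linex

/-- For `X ~ Exp(μ, σ/n)` and `T ~ Gamma(n-1, σ)` independent, the Linex risk
of `X + c·T` is finite for all `c` with `p·c < 1`, and is uniquely minimized over this set at
`c₀ = (1/p)(1 - (n/(n-p))^{1/n})`; thus `X + c₀·T` is the best affine equivariant estimator. -/
theorem stmt_0 {Ω : Type*} [MeasurableSpace Ω] (P : Measure Ω) [IsProbabilityMeasure P]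
    (n : ℕ) (hn : 2 ≤ n) (p : ℝ) (hp : p ≠ 0) (hpn : p < n)
    (μ σ : ℝ) (hσ : 0 < σ)
    (X T : Ω → ℝ) (hX : Measurable X) (hT : Measurable T)
    (hindep : IndepFun X T P)
    (hXlaw : Measure.map X P = expLocMeasure μ (σ / n))
    (hTlaw : Measure.map T P = gammaScaleMeasure ((n : ℝ) - 1) σ) :
    (∀ c : ℝ, p * c < 1 →
      linexRisk P p μ σ (fun ω => X ω + c * T ω) ≠ ⊤) ∧
    p * ((1 / p) * (1 - ((n : ℝ) / ((n : ℝ) - p)) ^ ((1 : ℝ) / (n : ℝ)))) < 1 ∧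
    (∀ c : ℝ, p * c < 1 →
      c ≠ (1 / p) * (1 - ((n : ℝ) / ((n : ℝ) - p)) ^ ((1 : ℝ) / (n : ℝ))) →
      linexRisk P p μ σ
          (fun ω => X ω +
            ((1 / p) * (1 - ((n : ℝ) / ((n : ℝ) - p)) ^ ((1 : ℝ) / (n : ℝ)))) * T ω) <
        linexRisk P p μ σ (fun ω => X ω + c * T ω)) := by
  have hn1 : (1 : ℝ) < n := by exact_mod_cast hn
  have hloss (c : ℝ) (hc : p * c < 1) :=
    integral_linexLoss_add_mul hn1 hσ hX hT hindep hXlaw hTlaw hpn hc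
  have hrisk : ∀ c, p * c < 1 →
      linexRisk P p μ σ (fun ω => X ω + c * T ω) = ENNReal.ofReal (affineLinexRisk n p c) :=
    fun c hc => (hloss c hc).2 ▸ linexRisk_eq_ofReal_integral (hloss c hc).1
  have hopt := mul_optimalScale_lt_one (n := n) (by linarith) hp hpn
  rw [optimalScale] at hopt
  refine ⟨fun c hc => hrisk c hc ▸ ENNReal.ofReal_ne_top, hopt, fun c hc hne => ?_⟩
  rw [hrisk c hc, hrisk _ hopt, ENNReal.ofReal_lt_ofReal_iff_of_nonneg
    ((hloss _ hopt).2 ▸ integral_nonneg fun _ => linexLoss_nonneg _ _)]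
  exact affineLinexRisk_optimalScale_lt hn1 hp hpn hc hne
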